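/- Let ℓ ≥ 3 be an integer and let c = (ℓ² − 3ℓ + 6)/2. Let S be a Steiner triple system which admits a colouring in which one colour class has cardinality at least c + ℓ − 1 = (ℓ² − ℓ + 4)/2 and every other colour class, except possibly one, has at least c points. Then S admits a cyclic ℓ-good sequencing. -/

import Mathlib

/-- A Steiner triple system on point set `points` with block set `blocks`:
every block is a 3-element subset of `points`, and every pair of distinct
points lies in exactly one block. -/
def IsSTS {α : Type*} [DecidableEq α] (points : Finset α) (blocks : Finset (Finset α)) : Prop :=
  (∀ b ∈ blocks, b ⊆ points ∧ b.card = 3) ∧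
  (∀ x ∈ points, ∀ y ∈ points, x ≠ y → ∃! b, b ∈ blocks ∧ x ∈ b ∧ y ∈ b)

/-- An `ℓ`-good sequencing: a permutation (listing) of the points such that no
`ℓ` consecutive entries contain a block. -/
def IsGoodSeq {α : Type*} [DecidableEq α] (points : Finset α) (blocks : Finset (Finset α))
    (ℓ : ℕ) (L : List α) : Prop :=
  L.Nodup ∧ L.toFinset = points ∧
  ∀ i : ℕ, ∀ b ∈ blocks, ¬ b ⊆ ((L.drop i).take ℓ).toFinset

/-- A cyclic `ℓ`-good sequencing: a permutation (listing) of the points such that no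
`ℓ` cyclically consecutive entries contain a block. -/
def IsCyclicGoodSeq {α : Type*} [DecidableEq α] (points : Finset α) (blocks : Finset (Finset α))
    (ℓ : ℕ) (L : List α) : Prop :=
  L.Nodup ∧ L.toFinset = points ∧
  ∀ i : ℕ, ∀ b ∈ blocks, ¬ b ⊆ (((L ++ L).drop i).take ℓ).toFinset

/-- An independent set: a set of points containing no block. -/
def IsIndep {α : Type*} [DecidableEq α] (blocks : Finset (Finset α)) (I : Finset α) : Prop :=
  ∀ b ∈ blocks, ¬ b ⊆ I

/-- A (proper) colouring with colour set `Fin k`: no block is monochromatic,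
i.e. every colour class is an independent set. -/
def IsColouring {α : Type*} [DecidableEq α] (blocks : Finset (Finset α)) {k : ℕ}
    (χ : α → Fin k) : Prop :=
  ∀ b ∈ blocks, ∃ x ∈ b, ∃ y ∈ b, χ x ≠ χ y

/-- A colouring with three explicitly given colour classes `A`, `B`, `C`:
they partition the point set and each is independent. -/
def IsColouring3 {α : Type*} [DecidableEq α] (points : Finset α) (blocks : Finset (Finset α))
    (A B C : Finset α) : Prop :=
  A ∪ B ∪ C = points ∧ Disjoint A B ∧ Disjoint A C ∧ Disjoint B C ∧
  IsIndep blocks A ∧ IsIndep blocks B ∧ IsIndep blocks C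

section Aux
variable {α : Type*} [DecidableEq α]

private lemma le_choose2 (n : ℕ) : n ≤ n.choose 2 + 1 := by
  cases n with
  | zero => simp
  | succ n => rw [Nat.choose_succ_succ, Nat.choose_one_right]; omega

private lemma block_card3 {points : Finset α} {blocks : Finset (Finset α)}
    (hS : IsSTS points blocks) {b : Finset α} (hb : b ∈ blocks) : b.card = 3 :=
  (hS.1 b hb).2

private lemma block_unique {points : Finset α} {blocks : Finset (Finset α)}
    (hS : IsSTS points blocks) {b b' q : Finset α} (hb : b ∈ blocks) (hb' : b' ∈ blocks)
    (hq : q.card = 2) (h1 : q ⊆ b) (h2 : q ⊆ b') : b = b' := by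
  obtain ⟨x, y, hxy, rfl⟩ := Finset.card_eq_two.1 hq
  have hxb : x ∈ b := h1 (by simp)
  have hyb : y ∈ b := h1 (by simp)
  have hxp : x ∈ points := (hS.1 b hb).1 hxb
  have hyp : y ∈ points := (hS.1 b hb).1 hyb
  obtain ⟨u, _, huniq⟩ := hS.2 x hxp y hyp hxy
  rw [huniq b ⟨hb, hxb, hyb⟩, huniq b' ⟨hb', h2 (by simp), h2 (by simp)⟩]

private lemma choose_step {points : Finset α} {blocks : Finset (Finset α)}
    (hS : IsSTS points blocks) (A G W : Finset α) (hGW : G ⊆ W)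
    (hblk : ∀ b ∈ blocks, ¬ b ⊆ A ∪ G)
    (hcount : W.card.choose 2 < A.card + G.card.choose 2) :
    ∃ z ∈ A, ∀ b ∈ blocks, z ∈ b → ¬ b \ {z} ⊆ W := by
  classical
  set Bad := A.filter (fun z => ∃ b ∈ blocks, z ∈ b ∧ b \ {z} ⊆ W) with hBadDef
  have hcard : Bad.card ≤ (W.powersetCard 2 \ G.powersetCard 2).card := by
    apply Finset.card_le_card_of_injOn
      (fun z => if h : ∃ b ∈ blocks, z ∈ b ∧ b \ {z} ⊆ W then h.choose \ {z} else ∅)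
    · intro z hz
      have hzA : z ∈ A := (Finset.mem_filter.1 hz).1
      have hex := (Finset.mem_filter.1 hz).2
      obtain ⟨hbm, hzb, hbW⟩ := hex.choose_spec
      simp only [dif_pos hex]
      have hcard2 : (hex.choose \ {z}).card = 2 := by
        rw [Finset.card_sdiff_of_subset (Finset.singleton_subset_iff.2 hzb), block_card3 hS hbm]
        simp
      rw [Finset.mem_coe, Finset.mem_sdiff]
      refine ⟨Finset.mem_powersetCard.2 ⟨hbW, hcard2⟩, ?_⟩
      intro hmem
      have hsubG := (Finset.mem_powersetCard.1 hmem).1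
      apply hblk hex.choose hbm
      intro x hx
      by_cases hxz : x = z
      · subst hxz; exact Finset.mem_union_left _ hzA
      · exact Finset.mem_union_right _ (hsubG (Finset.mem_sdiff.2 ⟨hx, by simp [hxz]⟩))
    · intro z hz z' hz' heq
      have hex := (Finset.mem_filter.1 (Finset.mem_coe.1 hz)).2
      have hex' := (Finset.mem_filter.1 (Finset.mem_coe.1 hz')).2
      obtain ⟨hbm, hzb, hbW⟩ := hex.choose_spec
      obtain ⟨hbm', hzb', hbW'⟩ := hex'.choose_spec
      dsimp only at heq
      rw [dif_pos hex, dif_pos hex'] at heq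
      have hq2 : (hex.choose \ {z}).card = 2 := by
        rw [Finset.card_sdiff_of_subset (Finset.singleton_subset_iff.2 hzb), block_card3 hS hbm]; simp
      have hbb' : hex.choose = hex'.choose := by
        apply block_unique hS hbm hbm' hq2 Finset.sdiff_subset
        rw [heq]; exact Finset.sdiff_subset
      have e1 : hex.choose \ (hex.choose \ {z}) = {z} := by
        rw [Finset.sdiff_sdiff_self_left]
        exact Finset.inter_eq_right.2 (Finset.singleton_subset_iff.2 hzb)
      have e2 : hex'.choose \ (hex'.choose \ {z'}) = {z'} := by
        rw [Finset.sdiff_sdiff_self_left]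
        exact Finset.inter_eq_right.2 (Finset.singleton_subset_iff.2 hzb')
      rw [heq, hbb', e2] at e1
      exact (Finset.singleton_injective e1.symm)
  have hsd : (W.powersetCard 2 \ G.powersetCard 2).card
      = W.card.choose 2 - G.card.choose 2 := by
    rw [Finset.card_sdiff_of_subset (Finset.powersetCard_mono hGW), Finset.card_powersetCard,
      Finset.card_powersetCard]
  have hGc : G.card.choose 2 ≤ W.card.choose 2 :=
    Nat.choose_le_choose 2 (Finset.card_le_card hGW)
  have hBadA : Bad ⊆ A := Finset.filter_subset _ _
  have hlt : Bad.card < A.card := by omega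
  have hne : (A \ Bad).Nonempty := by
    rw [← Finset.card_pos, Finset.card_sdiff_of_subset hBadA]; omega
  obtain ⟨z, hz⟩ := hne
  have hzA : z ∈ A := (Finset.mem_sdiff.1 hz).1
  have hzB : z ∉ Bad := (Finset.mem_sdiff.1 hz).2
  refine ⟨z, hzA, ?_⟩
  intro b hb hzb hsub
  exact hzB (Finset.mem_filter.2 ⟨hzA, ⟨b, hb, hzb, hsub⟩⟩)

private def Ok (blocks : Finset (Finset α)) (ℓ : ℕ) (M : List α) : Prop :=
  ∀ i : ℕ, ∀ b ∈ blocks, ¬ b ⊆ ((M.drop i).take ℓ).toFinset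

private lemma ok_of_indep {blocks : Finset (Finset α)} {ℓ : ℕ} {S : Finset α}
    (hind : IsIndep blocks S) {M : List α} (hsub : ∀ x ∈ M, x ∈ S) :
    Ok blocks ℓ M := by
  intro i b hb hsubw
  apply hind b hb
  intro x hx
  have := hsubw hx
  rw [List.mem_toFinset] at this
  exact hsub x (List.drop_subset i M (List.take_subset ℓ _ this))

private lemma ok_append_one {blocks : Finset (Finset α)} {ℓ : ℕ} (hl : 1 ≤ ℓ)
    {M : List α} (hM : Ok blocks ℓ M) {z : α}
    (hz : ∀ b ∈ blocks, z ∈ b → ¬ b \ {z} ⊆ (M.drop (M.length - (ℓ - 1))).toFinset) :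
    Ok blocks ℓ (M ++ [z]) := by
  intro i b hb hsub
  by_cases hi : i + ℓ ≤ M.length
  · apply hM i b hb
    have h1 : (M ++ [z]).drop i = M.drop i ++ [z] := by
      rw [List.drop_append]
      have h0 : i - M.length = 0 := by omega
      simp [h0]
    rw [h1, List.take_append] at hsub
    have hlen : (M.drop i).length = M.length - i := List.length_drop
    have h0 : ℓ - (M.drop i).length = 0 := by omega
    rw [h0] at hsub
    simpa using hsub
  · set W := M.drop (M.length - (ℓ - 1)) with hW
    have hwin : ∀ x ∈ ((M ++ [z]).drop i).take ℓ, x ∈ W ++ [z] := by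
      intro x hx
      have hx2 : x ∈ (M ++ [z]).drop i := List.take_subset _ _ hx
      have he : (M ++ [z]).drop i
          = ((M ++ [z]).drop (M.length - (ℓ - 1))).drop (i - (M.length - (ℓ - 1))) := by
        rw [List.drop_drop]
        congr 1
        omega
      rw [he] at hx2
      have hx3 : x ∈ (M ++ [z]).drop (M.length - (ℓ - 1)) := List.drop_subset _ _ hx2
      have heq : (M ++ [z]).drop (M.length - (ℓ - 1)) = W ++ [z] := by
        rw [List.drop_append]
        have h0 : M.length - (ℓ - 1) - M.length = 0 := by omega
        simp [h0, hW]
      rwa [heq] at hx3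
    by_cases hzb : z ∈ b
    · apply hz b hb hzb
      intro x hx
      have hxb : x ∈ b := (Finset.mem_sdiff.1 hx).1
      have hxz : x ≠ z := by
        have := (Finset.mem_sdiff.1 hx).2
        simpa using this
      have hm := hwin x (List.mem_toFinset.1 (hsub hxb))
      rw [List.mem_append] at hm
      rcases hm with h | h
      · exact List.mem_toFinset.2 h
      · simp at h; exact absurd h hxz
    · apply hM (M.length - (ℓ - 1)) b hb
      intro x hxb
      have hm := hwin x (List.mem_toFinset.1 (hsub hxb))
      rw [List.mem_append] at hm
      rcases hm with h | h
      · rw [List.mem_toFinset, List.take_of_length_le]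
        · exact h
        · have hWlen : (M.drop (M.length - (ℓ - 1))).length ≤ ℓ - 1 := by
            rw [List.length_drop]; omega
          omega
      · simp at h; subst h; exact absurd hxb hzb

private lemma buildClass {points : Finset α} {blocks : Finset (Finset α)}
    (hS : IsSTS points blocks) {ℓ c : ℕ} (hl : 3 ≤ ℓ) (hc2 : c = (ℓ - 1).choose 2 + 2)
    (M : List α) (hndM : M.Nodup) (hOk : Ok blocks ℓ M)
    (CC : Finset α) (hind : IsIndep blocks CC) (hdisj : ∀ x ∈ M, x ∉ CC)
    (hcard : c ≤ CC.card) :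
    ∀ n, n ≤ CC.card → ∃ Q : List α, Q.Nodup ∧ Q.length = n ∧ (∀ x ∈ Q, x ∈ CC) ∧
      (M ++ Q).Nodup ∧ Ok blocks ℓ (M ++ Q) := by
  intro n
  induction n with
  | zero =>
    exact fun _ => ⟨[], by simp, by simp, by simp, by simpa using hndM, by simpa using hOk⟩
  | succ n ih =>
    intro hn
    obtain ⟨Q, hQnd, hQlen, hQsub, hndMQ, hOkMQ⟩ := ih (by omega)
    have hQfin : Q.toFinset ⊆ CC := fun x hx => hQsub x (List.mem_toFinset.1 hx)
    have hQcard : Q.toFinset.card = n := by rw [List.toFinset_card_of_nodup hQnd, hQlen]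
    have hAcard : (CC \ Q.toFinset).card = CC.card - n := by
      rw [Finset.card_sdiff_of_subset hQfin, hQcard]
    set Wl := (M ++ Q).drop ((M ++ Q).length - (ℓ - 1)) with hWl
    have hWlen : Wl.length ≤ ℓ - 1 := by rw [hWl, List.length_drop]; omega
    have hWcard : Wl.toFinset.card ≤ ℓ - 1 := le_trans (List.toFinset_card_le _) hWlen
    have hblk : ∀ b ∈ blocks, ¬ b ⊆ (CC \ Q.toFinset) ∪ (Wl.toFinset ∩ CC) := by
      intro b hb hsub
      exact hind b hb
        (hsub.trans (Finset.union_subset Finset.sdiff_subset Finset.inter_subset_right))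
    have hcount : Wl.toFinset.card.choose 2
        < (CC \ Q.toFinset).card + (Wl.toFinset ∩ CC).card.choose 2 := by
      by_cases hcase : n ≤ ℓ - 1
      · have hQW : ∀ x ∈ Q, x ∈ Wl := by
          intro x hx
          have hWQ : Wl = M.drop ((M ++ Q).length - (ℓ - 1)) ++ Q := by
            rw [hWl, List.drop_append]
            have h0 : (M ++ Q).length - (ℓ - 1) - M.length = 0 := by
              rw [List.length_append]; omega
            rw [h0]
            simp
          rw [hWQ, List.mem_append]
          right
          exact hx
        have hGcard : n ≤ (Wl.toFinset ∩ CC).card := by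
          rw [← hQcard]
          apply Finset.card_le_card
          intro x hx
          exact Finset.mem_inter.2
            ⟨List.mem_toFinset.2 (hQW x (List.mem_toFinset.1 hx)), hQfin hx⟩
        have h1 : Wl.toFinset.card.choose 2 ≤ (ℓ - 1).choose 2 :=
          Nat.choose_le_choose 2 hWcard
        have h2 : n.choose 2 ≤ (Wl.toFinset ∩ CC).card.choose 2 :=
          Nat.choose_le_choose 2 hGcard
        have h3 := le_choose2 n
        omega
      · have hWQ : ∀ x ∈ Wl, x ∈ CC := by
          intro x hx
          have hWQ2 : Wl = Q.drop ((M ++ Q).length - (ℓ - 1) - M.length) := by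
            rw [hWl, List.drop_append, List.drop_eq_nil_of_le, List.nil_append]
            rw [List.length_append]; omega
          rw [hWQ2] at hx
          exact hQsub x (List.drop_subset _ _ hx)
        have hGeq : Wl.toFinset ∩ CC = Wl.toFinset := by
          apply Finset.inter_eq_left.2
          intro x hx
          exact hWQ x (List.mem_toFinset.1 hx)
        rw [hGeq]
        omega
    obtain ⟨z, hzA, hzgood⟩ := choose_step hS (CC \ Q.toFinset) (Wl.toFinset ∩ CC)
      Wl.toFinset Finset.inter_subset_left hblk hcount
    have hzCC : z ∈ CC := (Finset.mem_sdiff.1 hzA).1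
    have hznQ : z ∉ Q := fun h => (Finset.mem_sdiff.1 hzA).2 (List.mem_toFinset.2 h)
    have hznM : z ∉ M := fun h => hdisj z h hzCC
    refine ⟨Q ++ [z], ?_, ?_, ?_, ?_, ?_⟩
    · exact List.Nodup.append hQnd (by simp)
        (by intro x hx hx2; simp at hx2; subst hx2; exact hznQ hx)
    · simp [hQlen]
    · intro x hx
      rw [List.mem_append] at hx
      rcases hx with h | h
      · exact hQsub x h
      · simp at h; subst h; exact hzCC
    · rw [← List.append_assoc]
      apply List.Nodup.append hndMQ (by simp)
      intro x hx hx2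
      simp at hx2
      subst hx2
      rw [List.mem_append] at hx
      rcases hx with h | h
      · exact hznM h
      · exact hznQ h
    · rw [← List.append_assoc]
      exact ok_append_one (by omega) hOkMQ (fun b hb hzb => hzgood b hb hzb)

private lemma mem_foldr_union (js : List (Finset α)) (x : α) :
    x ∈ js.foldr (· ∪ ·) ∅ ↔ ∃ CC ∈ js, x ∈ CC := by
  induction js with
  | nil => simp
  | cons CC js ih => simp [ih]

private lemma buildMiddles {points : Finset α} {blocks : Finset (Finset α)}
    (hS : IsSTS points blocks) {ℓ c : ℕ} (hl : 3 ≤ ℓ) (hc2 : c = (ℓ - 1).choose 2 + 2) :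
    ∀ js : List (Finset α),
      (∀ CC ∈ js, IsIndep blocks CC ∧ c ≤ CC.card) →
      List.Pairwise Disjoint js →
      ∀ M : List α, M.Nodup → Ok blocks ℓ M → (∀ CC ∈ js, ∀ x ∈ M, x ∉ CC) →
      ∃ N : List α, N.Nodup ∧ Ok blocks ℓ N ∧
        N.toFinset = M.toFinset ∪ js.foldr (· ∪ ·) ∅ := by
  intro js
  induction js with
  | nil =>
    intro _ _ M hnd hOk _
    exact ⟨M, hnd, hOk, by simp⟩
  | cons CC js ih =>
    intro hprop hpair M hnd hOk hdisj
    obtain ⟨Q, hQnd, hQlen, hQsub, hndMQ, hOkMQ⟩ :=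
      buildClass hS hl hc2 M hnd hOk CC (hprop CC (by simp)).1
        (fun x hx hxCC => hdisj CC (by simp) x hx hxCC)
        (hprop CC (by simp)).2 CC.card le_rfl
    have hQfin : Q.toFinset = CC := by
      apply Finset.eq_of_subset_of_card_le
      · intro x hx; exact hQsub x (List.mem_toFinset.1 hx)
      · rw [List.toFinset_card_of_nodup hQnd, hQlen]
    have hside : ∀ DD ∈ js, ∀ x ∈ M ++ Q, x ∉ DD := by
      intro DD hDD x hx hxDD
      rw [List.mem_append] at hx
      rcases hx with h | h
      · exact hdisj DD (by simp [hDD]) x h hxDD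
      · have hCD : Disjoint CC DD := by
          rw [List.pairwise_cons] at hpair
          exact hpair.1 DD hDD
        exact Finset.disjoint_left.1 hCD (hQsub x h) hxDD
    obtain ⟨N, hNnd, hNok, hNfin⟩ := ih (fun DD hDD => hprop DD (by simp [hDD]))
      (List.Pairwise.sublist (List.sublist_cons_self CC js) hpair)
      (M ++ Q) hndMQ hOkMQ hside
    refine ⟨N, hNnd, hNok, ?_⟩
    rw [hNfin, List.toFinset_append, hQfin]
    simp [Finset.union_assoc]

private lemma buildSuffix {points : Finset α} {blocks : Finset (Finset α)}
    (hS : IsSTS points blocks) {ℓ c : ℕ} (hl : 3 ≤ ℓ) (hc2 : c = (ℓ - 1).choose 2 + 2)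
    (Hbase : List α) (hOkH : Ok blocks ℓ Hbase) (hHlen : ℓ - 1 ≤ Hbase.length)
    (Big : Finset α) (hind : IsIndep blocks Big) (hBigcard : c + ℓ - 1 ≤ Big.card)
    (U : Finset α) (hU : U ⊆ Big) (hUcard : U.card = ℓ - 1) :
    ∀ d, d ≤ ℓ - 1 → ∃ T : List α, T.length = d ∧ T.Nodup ∧ (∀ x ∈ T, x ∈ Big \ U) ∧
      (∀ s ≤ d, ∀ b ∈ blocks,
        ¬ b ⊆ (T.drop (d - s)).toFinset ∪ (Hbase.take (ℓ - s)).toFinset) := by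
  intro d
  induction d with
  | zero =>
    intro _
    refine ⟨[], rfl, by simp, by simp, ?_⟩
    intro s hs b hb hsub
    have hs0 : s = 0 := by omega
    subst hs0
    apply hOkH 0 b hb
    simpa using hsub
  | succ d ihd =>
    intro hd1
    obtain ⟨T, hTlen, hTnd, hTsub, hInv⟩ := ihd (by omega)
    have hTfin : T.toFinset ⊆ Big \ U := fun x hx => hTsub x (List.mem_toFinset.1 hx)
    have hTcard : T.toFinset.card = d := by rw [List.toFinset_card_of_nodup hTnd, hTlen]
    have hBU : (Big \ U).card = Big.card - (ℓ - 1) := by rw [Finset.card_sdiff_of_subset hU, hUcard]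
    have hAcard : ((Big \ U) \ T.toFinset).card = Big.card - (ℓ - 1) - d := by
      rw [Finset.card_sdiff_of_subset hTfin, hBU, hTcard]
    set Wf := T.toFinset ∪ (Hbase.take (ℓ - (d + 1))).toFinset with hWf
    have htklen : (Hbase.take (ℓ - (d + 1))).length = ℓ - (d + 1) := by
      rw [List.length_take]
      clear * - hHlen hd1
      omega
    have hWcard : Wf.card ≤ ℓ - 1 := by
      calc Wf.card ≤ T.toFinset.card + (Hbase.take (ℓ - (d + 1))).toFinset.card :=
            Finset.card_union_le _ _
        _ ≤ d + (ℓ - (d + 1)) := by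
            have h9 := List.toFinset_card_le (Hbase.take (ℓ - (d + 1)))
            clear * - h9 hTcard htklen
            omega
        _ ≤ ℓ - 1 := by clear * - hd1; omega
    have hblk : ∀ b ∈ blocks, ¬ b ⊆ ((Big \ U) \ T.toFinset) ∪ (Wf ∩ Big) := by
      intro b hb hsub
      apply hind b hb
      refine hsub.trans (Finset.union_subset ?_ Finset.inter_subset_right)
      exact fun x hx => (Finset.mem_sdiff.1 (Finset.mem_sdiff.1 hx).1).1
    have hGT : T.toFinset ⊆ Wf ∩ Big := by
      intro x hx
      exact Finset.mem_inter.2 ⟨Finset.mem_union_left _ hx,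
        (Finset.mem_sdiff.1 (hTfin hx)).1⟩
    have hcount : Wf.card.choose 2
        < ((Big \ U) \ T.toFinset).card + (Wf ∩ Big).card.choose 2 := by
      have h1 : Wf.card.choose 2 ≤ (ℓ - 1).choose 2 := Nat.choose_le_choose 2 hWcard
      have h2 : d.choose 2 ≤ (Wf ∩ Big).card.choose 2 := by
        apply Nat.choose_le_choose
        rw [← hTcard]
        exact Finset.card_le_card hGT
      have h3 := le_choose2 d
      have h4 := le_choose2 (ℓ - 1)
      have h5 := hAcard
      have h6 := hBigcard
      clear * - h1 h2 h3 h4 h5 h6 hc2 hl hd1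
      omega
    obtain ⟨z, hzA, hzgood⟩ := choose_step hS ((Big \ U) \ T.toFinset) (Wf ∩ Big)
      Wf Finset.inter_subset_left hblk hcount
    have hzBU : z ∈ Big \ U := (Finset.mem_sdiff.1 hzA).1
    have hznT : z ∉ T := fun h => (Finset.mem_sdiff.1 hzA).2 (List.mem_toFinset.2 h)
    refine ⟨z :: T, by simp [hTlen], by simp [hTnd, hznT], ?_, ?_⟩
    · intro x hx
      rcases List.mem_cons.1 hx with h | h
      · subst h; exact hzBU
      · exact hTsub x h
    · intro s hs b hb hsub
      by_cases hsd : s ≤ d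
      · apply hInv s hsd b hb
        have hdr : (z :: T).drop (d + 1 - s) = T.drop (d - s) := by
          have : d + 1 - s = (d - s) + 1 := by omega
          rw [this, List.drop_succ_cons]
        rwa [hdr] at hsub
      · have hse : s = d + 1 := by omega
        subst hse
        rw [Nat.sub_self, List.drop_zero] at hsub
        by_cases hzb : z ∈ b
        · apply hzgood b hb hzb
          intro x hx
          have hxb : x ∈ b := (Finset.mem_sdiff.1 hx).1
          have hxz : x ≠ z := by
            have := (Finset.mem_sdiff.1 hx).2
            simpa using this
          have := hsub hxb
          rw [Finset.mem_union] at this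
          rcases this with h | h
          · rw [List.toFinset_cons, Finset.mem_insert] at h
            rcases h with h | h
            · exact absurd h hxz
            · exact Finset.mem_union_left _ h
          · exact Finset.mem_union_right _ h
        · apply hInv d le_rfl b hb
          rw [Nat.sub_self, List.drop_zero]
          intro x hxb
          have := hsub hxb
          rw [Finset.mem_union] at this
          rcases this with h | h
          · rw [List.toFinset_cons, Finset.mem_insert] at h
            rcases h with h | h
            · subst h; exact absurd hxb hzb
            · exact Finset.mem_union_left _ h
          · apply Finset.mem_union_right
            rw [List.mem_toFinset] at h ⊢
            have hsub2 : Hbase.take (ℓ - (d + 1)) = (Hbase.take (ℓ - d)).take (ℓ - (d + 1)) := by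
              rw [List.take_take]
              congr 1
              omega
            rw [hsub2] at h
            exact List.take_subset _ _ h

end Aux

theorem stmt7 (ℓ : ℕ) (hℓ : 3 ≤ ℓ) (c : ℕ) (hc : 2 * (c : ℤ) = ℓ ^ 2 - 3 * ℓ + 6)
    {α : Type*} [DecidableEq α] (points : Finset α) (blocks : Finset (Finset α))
    (hS : IsSTS points blocks) (k : ℕ) (χ : α → Fin k) (hχ : IsColouring blocks χ)
    (j₁ : Fin k) (hbig : c + ℓ - 1 ≤ (points.filter (fun x => χ x = j₁)).card)
    (j₀ : Fin k)
    (hclasses : ∀ j : Fin k, j ≠ j₁ → j ≠ j₀ →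
      c ≤ (points.filter (fun x => χ x = j)).card) :
    ∃ L : List α, IsCyclicGoodSeq points blocks ℓ L := by
  classical
  -- the exact value of c
  have hceq : c = (ℓ - 1).choose 2 + 2 := by
    have h1 : (ℓ - 1).choose 2 * 2 = (ℓ - 1) * (ℓ - 2) := by
      rw [Nat.choose_two_right]
      have h2 : ℓ - 1 - 1 = ℓ - 2 := by omega
      rw [h2]
      apply Nat.div_mul_cancel
      have he : Even ((ℓ - 2) * (ℓ - 2 + 1)) := Nat.even_mul_succ_self _
      have h3 : ℓ - 2 + 1 = ℓ - 1 := by omega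
      rw [h3] at he
      obtain ⟨r, hr⟩ := he
      exact ⟨r, by rw [Nat.mul_comm]; omega⟩
    have hnat : 2 * c = (ℓ - 1) * (ℓ - 2) + 4 := by
      have l1 : ((ℓ - 1 : ℕ) : ℤ) = (ℓ : ℤ) - 1 := by omega
      have l2 : ((ℓ - 2 : ℕ) : ℤ) = (ℓ : ℤ) - 2 := by omega
      have hz : (2 * c : ℤ) = ((ℓ - 1 : ℕ) : ℤ) * ((ℓ - 2 : ℕ) : ℤ) + 4 := by
        rw [l1, l2]; linear_combination hc
      exact_mod_cast hz
    omega
  set Cl : Fin k → Finset α := fun j => points.filter (fun x => χ x = j) with hCl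
  have hindepCl : ∀ j, IsIndep blocks (Cl j) := by
    intro j b hb hsub
    obtain ⟨x, hx, y, hy, hxy⟩ := hχ b hb
    apply hxy
    have h1 := (Finset.mem_filter.1 (hsub hx)).2
    have h2 := (Finset.mem_filter.1 (hsub hy)).2
    rw [h1, h2]
  have hdisjCl : ∀ j j' : Fin k, j ≠ j' → ∀ x, x ∈ Cl j → x ∉ Cl j' := by
    intro j j' hne x hx hx'
    apply hne
    rw [← (Finset.mem_filter.1 hx).2, ← (Finset.mem_filter.1 hx').2]
  set Big := Cl j₁ with hBig
  -- the initial (possibly small) class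
  set E : List α := if j₀ = j₁ then [] else (Cl j₀).toList with hE
  have hEnd : E.Nodup := by
    rw [hE]; split_ifs
    · simp
    · exact Finset.nodup_toList _
  have hEsub : ∀ x ∈ E, x ∈ Cl j₀ := by
    rw [hE]; split_ifs
    · simp
    · intro x hx; simpa using hx
  have hEok : Ok blocks ℓ E := ok_of_indep (hindepCl j₀) hEsub
  -- middle classes
  set js : List (Finset α) := ((Finset.univ.erase j₁).erase j₀).toList.map Cl with hjs
  have hjsmem : ∀ CC ∈ js, ∃ j : Fin k, j ≠ j₀ ∧ j ≠ j₁ ∧ CC = Cl j := by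
    intro CC hCC
    rw [hjs, List.mem_map] at hCC
    obtain ⟨j, hj, rfl⟩ := hCC
    rw [Finset.mem_toList, Finset.mem_erase, Finset.mem_erase] at hj
    exact ⟨j, hj.1, hj.2.1, rfl⟩
  have hjsprop : ∀ CC ∈ js, IsIndep blocks CC ∧ c ≤ CC.card := by
    intro CC hCC
    obtain ⟨j, hj0, hj1, rfl⟩ := hjsmem CC hCC
    exact ⟨hindepCl j, hclasses j hj1 hj0⟩
  have hjspair : List.Pairwise Disjoint js := by
    rw [hjs, List.pairwise_map]
    apply List.Pairwise.imp ?_ (Finset.nodup_toList _)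
    intro a b hab
    rw [Finset.disjoint_left]
    intro x hx
    exact hdisjCl a b hab x hx
  have hjsE : ∀ CC ∈ js, ∀ x ∈ E, x ∉ CC := by
    intro CC hCC x hx
    obtain ⟨j, hj0, hj1, rfl⟩ := hjsmem CC hCC
    exact hdisjCl j₀ j (fun h => hj0 h.symm) x (hEsub x hx)
  obtain ⟨N, hNnd, hNok, hNfin⟩ :=
    buildMiddles hS hℓ hceq js hjsprop hjspair E hEnd hEok hjsE
  -- N covers points \ Big
  have hNfin2 : N.toFinset = points \ Big := by
    rw [hNfin]
    ext x
    rw [Finset.mem_union, Finset.mem_sdiff, mem_foldr_union]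
    constructor
    · rintro (hx | ⟨CC, hCC, hx⟩)
      · rw [List.mem_toFinset] at hx
        have hx0 := hEsub x hx
        have hne : j₀ ≠ j₁ := by
          intro h
          rw [hE, if_pos h] at hx
          simp at hx
        exact ⟨(Finset.mem_filter.1 hx0).1, hdisjCl j₀ j₁ hne x hx0⟩
      · obtain ⟨j, hj0, hj1, rfl⟩ := hjsmem CC hCC
        exact ⟨(Finset.mem_filter.1 hx).1, hdisjCl j j₁ hj1 x hx⟩
    · rintro ⟨hxp, hxB⟩
      have hxCl : x ∈ Cl (χ x) := Finset.mem_filter.2 ⟨hxp, rfl⟩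
      have hne1 : χ x ≠ j₁ := by
        intro h
        exact hxB (by rw [hBig, ← h]; exact hxCl)
      by_cases h0 : χ x = j₀
      · left
        rw [List.mem_toFinset, hE, if_neg (by rw [← h0]; exact hne1)]
        rw [Finset.mem_toList, ← h0]
        exact hxCl
      · right
        refine ⟨Cl (χ x), ?_, hxCl⟩
        rw [hjs, List.mem_map]
        refine ⟨χ x, ?_, rfl⟩
        rw [Finset.mem_toList, Finset.mem_erase, Finset.mem_erase]
        exact ⟨h0, hne1, Finset.mem_univ _⟩
  have hNdisjBig : ∀ x ∈ N, x ∉ Big := by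
    intro x hx hxB
    have : x ∈ N.toFinset := List.mem_toFinset.2 hx
    rw [hNfin2, Finset.mem_sdiff] at this
    exact this.2 hxB
  have hbigB : c + ℓ - 1 ≤ Big.card := hbig
  -- prefix of the big class
  obtain ⟨Pfx, hPnd, hPlen, hPsub, hndNP, hOkNP⟩ :=
    buildClass hS hℓ hceq N hNnd hNok Big (hindepCl j₁) hNdisjBig
      (by omega) (ℓ - 1) (by omega)
  set Hb := N ++ Pfx with hHb
  have hHblen : ℓ - 1 ≤ Hb.length := by
    rw [hHb, List.length_append, hPlen]; omega
  have hUsub : Pfx.toFinset ⊆ Big := fun x hx => hPsub x (List.mem_toFinset.1 hx)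
  have hUcard : Pfx.toFinset.card = ℓ - 1 := by
    rw [List.toFinset_card_of_nodup hPnd, hPlen]
  -- suffix of the big class
  obtain ⟨T, hTlen, hTnd, hTsub, hInv⟩ :=
    buildSuffix hS hℓ hceq Hb hOkNP hHblen Big (hindepCl j₁) hbigB
      Pfx.toFinset hUsub hUcard (ℓ - 1) le_rfl
  set Mid := ((Big \ Pfx.toFinset) \ T.toFinset).toList with hMid
  set L := Hb ++ (Mid ++ T) with hLdef
  have hTfin : T.toFinset ⊆ Big \ Pfx.toFinset :=
    fun x hx => hTsub x (List.mem_toFinset.1 hx)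
  have hMidfin : Mid.toFinset = (Big \ Pfx.toFinset) \ T.toFinset := by
    rw [hMid, Finset.toList_toFinset]
  -- membership helpers
  have hMTsubBig : ∀ x, x ∈ Mid ∨ x ∈ T → x ∈ Big := by
    intro x hx
    rcases hx with h | h
    · have : x ∈ Mid.toFinset := List.mem_toFinset.2 h
      rw [hMidfin] at this
      exact (Finset.mem_sdiff.1 (Finset.mem_sdiff.1 this).1).1
    · exact (Finset.mem_sdiff.1 (hTsub x h)).1
  have hHbBigU : ∀ x ∈ Hb, x ∈ Big → x ∈ Pfx.toFinset := by
    intro x hx hxB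
    rw [hHb, List.mem_append] at hx
    rcases hx with h | h
    · exact absurd hxB (hNdisjBig x h)
    · exact List.mem_toFinset.2 h
  -- nodup
  have hMidnd : Mid.Nodup := by rw [hMid]; exact Finset.nodup_toList _
  have hMTnd : (Mid ++ T).Nodup := by
    apply List.Nodup.append hMidnd hTnd
    intro x hx hx2
    have h1 : x ∈ Mid.toFinset := List.mem_toFinset.2 hx
    rw [hMidfin] at h1
    exact (Finset.mem_sdiff.1 h1).2 (List.mem_toFinset.2 hx2)
  have hLnd : L.Nodup := by
    rw [hLdef]
    apply List.Nodup.append hndNP hMTnd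
    intro x hx hx2
    have hxB : x ∈ Big := hMTsubBig x (List.mem_append.1 hx2)
    have hxU : x ∈ Pfx.toFinset := hHbBigU x hx hxB
    rw [List.mem_append] at hx2
    rcases hx2 with h | h
    · have h1 : x ∈ Mid.toFinset := List.mem_toFinset.2 h
      rw [hMidfin] at h1
      exact (Finset.mem_sdiff.1 (Finset.mem_sdiff.1 h1).1).2 hxU
    · exact (Finset.mem_sdiff.1 (hTsub x h)).2 hxU
  -- toFinset
  have hLfin : L.toFinset = points := by
    rw [hLdef, List.toFinset_append, List.toFinset_append, List.toFinset_append, hMidfin]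
    rw [hNfin2]
    have h1 : (Big \ Pfx.toFinset) \ T.toFinset ∪ T.toFinset = Big \ Pfx.toFinset :=
      Finset.sdiff_union_of_subset hTfin
    rw [Finset.union_assoc, h1]
    have h2 : Pfx.toFinset ∪ (Big \ Pfx.toFinset) = Big := by
      rw [Finset.union_comm]
      exact Finset.sdiff_union_of_subset hUsub
    rw [h2]
    have h3 : Big ⊆ points := Finset.filter_subset _ _
    exact Finset.sdiff_union_of_subset h3
  -- linear goodness of L
  have hOkL : Ok blocks ℓ L := by
    intro i b hb hsub
    by_cases hi : i + ℓ ≤ Hb.length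
    · apply hOkNP i b hb
      have hd : L.drop i = Hb.drop i ++ (Mid ++ T) := by
        rw [hLdef, List.drop_append]
        have h0 : i - Hb.length = 0 := by omega
        rw [h0]
        simp
      rw [hd, List.take_append] at hsub
      have hlen : (Hb.drop i).length = Hb.length - i := List.length_drop
      have h0 : ℓ - (Hb.drop i).length = 0 := by omega
      rw [h0] at hsub
      simpa using hsub
    · apply hindepCl j₁ b hb
      intro x hxb
      have hx := hsub hxb
      rw [List.mem_toFinset] at hx
      have hx2 : x ∈ L.drop i := List.take_subset _ _ hx
      have hiN : N.length ≤ i := by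
        have := hHblen
        rw [hHb, List.length_append, hPlen] at *
        omega
      have hdd : L.drop i = (L.drop N.length).drop (i - N.length) := by
        rw [List.drop_drop]
        congr 1
        omega
      rw [hdd] at hx2
      have hx3 : x ∈ L.drop N.length := List.drop_subset _ _ hx2
      have hdl : L.drop N.length = Pfx ++ (Mid ++ T) := by
        rw [hLdef, hHb, List.append_assoc, List.drop_left]
      rw [hdl, List.mem_append, List.mem_append] at hx3
      rcases hx3 with h | h
      · exact hUsub (List.mem_toFinset.2 h)
      · exact hMTsubBig x h
  -- lengths
  have hvlen : L.length = Hb.length + Mid.length + (ℓ - 1) := by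
    rw [hLdef]
    simp only [List.length_append, hTlen]
    omega
  -- final cyclic goodness
  refine ⟨L, hLnd, hLfin, ?_⟩
  intro i b hb hsub
  by_cases h1 : L.length ≤ i
  · apply hOkL (i - L.length) b hb
    have hd : (L ++ L).drop i = L.drop (i - L.length) := by
      rw [List.drop_append, List.drop_eq_nil_of_le h1, List.nil_append]
    rwa [hd] at hsub
  · have hd : (L ++ L).drop i = L.drop i ++ L := by
      rw [List.drop_append]
      have h0 : i - L.length = 0 := by omega
      rw [h0]
      simp
    by_cases h2 : i + ℓ ≤ L.length
    · apply hOkL i b hb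
      rw [hd, List.take_append] at hsub
      have h0 : ℓ - (L.drop i).length = 0 := by
        rw [List.length_drop]; omega
      rw [h0] at hsub
      simpa using hsub
    · -- wrap-around window
      set s := L.length - i with hs
      have hs1 : 1 ≤ s := by omega
      have hs2 : s ≤ ℓ - 1 := by omega
      apply hInv s hs2 b hb
      rw [hd, List.take_append] at hsub
      have hdl : (L.drop i).length = s := by rw [List.length_drop]
      have ht1 : (L.drop i).take ℓ = L.drop i := by
        apply List.take_of_length_le
        omega
      rw [ht1, hdl] at hsub
      have e1 : L.drop i = T.drop ((ℓ - 1) - s) := by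
        have hL2 : L = (Hb ++ Mid) ++ T := by
          rw [hLdef]
          exact (List.append_assoc Hb Mid T).symm
        have hml : (Hb ++ Mid).length = Hb.length + Mid.length := List.length_append
        rw [hL2, List.drop_append]
        rw [List.drop_eq_nil_of_le (by omega), List.nil_append]
        congr 1
        omega
      have e2 : L.take (ℓ - s) = Hb.take (ℓ - s) := by
        rw [hLdef, List.take_append]
        have h0 : (ℓ - s) - Hb.length = 0 := by omega
        rw [h0]
        simp
      rw [e1, e2, List.toFinset_append] at hsub
      exact hsub
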